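/- arXiv:1306.5284 — 3 statements merged into one kernel-verified Lean document; each statement's English description precedes it below -/
import Mathlib

section
/- Let a, b, c, a', b', c' ∈ ℂ with ac ≠ 0 and a² + c² ≠ 0. Suppose a'c' = ac, (a'² + c'²)·b' = (a² + c²)·b, and a'⁴ + c'⁴ = a⁴ + c⁴. Then there exists k ∈ {0, 1, 2, 3} such that (a', b', c') = ((−i)ᵏ·a, (−1)ᵏ·b, iᵏ·c) or (a', b', c') = ((−i)ᵏ·c, (−1)ᵏ·b, iᵏ·a), where i is the imaginary unit. -/
open Complex

lemma aux1 (a b c c' b' u v : ℂ) (ha : a ≠ 0) (hsum : a ^ 2 + c ^ 2 ≠ 0)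
    (huv : u * v = 1) (huu : u * u = v * v)
    (h2 : (u * a) * c' = a * c) (h3 : ((u * a) ^ 2 + c' ^ 2) * b' = (a ^ 2 + c ^ 2) * b) :
    c' = v * c ∧ b' = (u * u) * b := by
  have hu : u ≠ 0 := left_ne_zero_of_mul (huv ▸ one_ne_zero)
  have hc' : c' = v * c := by
    apply mul_left_cancel₀ (mul_ne_zero hu ha)
    linear_combination h2 - a * c * huv
  subst hc'
  refine ⟨rfl, ?_⟩
  have hu2 : u * u ≠ 0 := mul_ne_zero hu hu
  apply mul_left_cancel₀ (mul_ne_zero hu2 hsum)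
  linear_combination h3 + (c ^ 2 * b' - (u * u) * (a ^ 2 + c ^ 2) * b) * huu
    - (a ^ 2 + c ^ 2) * b * (u * v + 1) * huv

theorem stmt_3 (a b c a' b' c' : ℂ)
    (hac : a * c ≠ 0) (hsum : a ^ 2 + c ^ 2 ≠ 0)
    (h2 : a' * c' = a * c)
    (h3 : (a' ^ 2 + c' ^ 2) * b' = (a ^ 2 + c ^ 2) * b)
    (h4 : a' ^ 4 + c' ^ 4 = a ^ 4 + c ^ 4) :
    ∃ k : ℕ, k < 4 ∧
      ((a' = (-I) ^ k * a ∧ b' = (-1) ^ k * b ∧ c' = I ^ k * c) ∨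
       (a' = (-I) ^ k * c ∧ b' = (-1) ^ k * b ∧ c' = I ^ k * a)) := by
  have ha : a ≠ 0 := fun h => hac (by simp [h])
  have hc : c ≠ 0 := fun h => hac (by simp [h])
  have key : (a' ^ 4 - a ^ 4) * (a' ^ 4 - c ^ 4) = 0 := by
    linear_combination a' ^ 4 * h4 -
      (a' ^ 3 * c' ^ 3 + a' ^ 2 * c' ^ 2 * a * c + a' * c' * a ^ 2 * c ^ 2 + a ^ 3 * c ^ 3) * h2
  rcases mul_eq_zero.mp key with hk | hk
  · -- a'^4 = a^4
    have hfac : (a' - a) * (a' + a) * ((a' - I * a) * (a' + I * a)) = 0 := by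
      linear_combination hk - a ^ 2 * (a' ^ 2 - a ^ 2) * Complex.I_sq
    rcases mul_eq_zero.mp hfac with hfac | hfac
    · rcases mul_eq_zero.mp hfac with hfac | hfac
      · -- a' = a, k = 0
        have ha' : a' = 1 * a := by linear_combination hfac
        obtain ⟨hc', hb'⟩ := aux1 a b c c' b' 1 1 ha hsum (by ring) (by ring)
          (by linear_combination h2 - c' * ha')
          (by linear_combination h3 - b' * (a' + 1 * a) * ha')
        exact ⟨0, by norm_num, Or.inl ⟨by simpa using ha', by simpa using hb', by simpa using hc'⟩⟩
      · -- a' = -a, k = 2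
        have ha' : a' = -1 * a := by linear_combination hfac
        obtain ⟨hc', hb'⟩ := aux1 a b c c' b' (-1) (-1) ha hsum (by ring) (by ring)
          (by linear_combination h2 - c' * ha')
          (by linear_combination h3 - b' * (a' + (-1) * a) * ha')
        refine ⟨2, by norm_num, Or.inl ⟨?_, ?_, ?_⟩⟩
        · rw [ha']; norm_num
        · simpa using hb'
        · rw [hc']; norm_num [pow_two, Complex.I_mul_I]
    · rcases mul_eq_zero.mp hfac with hfac | hfac
      · -- a' = I * a, k = 3
        have ha' : a' = I * a := by linear_combination hfac
        obtain ⟨hc', hb'⟩ := aux1 a b c c' b' I (-I) ha hsum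
          (by simp [Complex.I_mul_I]) (by ring)
          (by linear_combination h2 - c' * ha')
          (by linear_combination h3 - b' * (a' + I * a) * ha')
        refine ⟨3, by norm_num, Or.inl ⟨?_, ?_, ?_⟩⟩
        · rw [ha']; norm_num [pow_succ, pow_two, Complex.I_mul_I]
        · rw [hb']; norm_num [Complex.I_mul_I]
        · rw [hc']; norm_num [pow_succ, pow_two, Complex.I_mul_I]
      · -- a' = -I * a, k = 1
        have ha' : a' = -I * a := by linear_combination hfac
        obtain ⟨hc', hb'⟩ := aux1 a b c c' b' (-I) I ha hsum
          (by simp [Complex.I_mul_I]) (by ring)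
          (by linear_combination h2 - c' * ha')
          (by linear_combination h3 - b' * (a' + (-I) * a) * ha')
        refine ⟨1, by norm_num, Or.inl ⟨?_, ?_, ?_⟩⟩
        · simpa using ha'
        · rw [hb']; norm_num [Complex.I_mul_I]
        · simpa using hc'
  · -- a'^4 = c^4
    have hsum' : c ^ 2 + a ^ 2 ≠ 0 := by rwa [add_comm]
    have hfac : (a' - c) * (a' + c) * ((a' - I * c) * (a' + I * c)) = 0 := by
      linear_combination hk - c ^ 2 * (a' ^ 2 - c ^ 2) * Complex.I_sq
    rcases mul_eq_zero.mp hfac with hfac | hfac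
    · rcases mul_eq_zero.mp hfac with hfac | hfac
      · have ha' : a' = 1 * c := by linear_combination hfac
        obtain ⟨hc', hb'⟩ := aux1 c b a c' b' 1 1 hc hsum' (by ring) (by ring)
          (by linear_combination h2 - c' * ha')
          (by linear_combination h3 - b' * (a' + 1 * c) * ha')
        exact ⟨0, by norm_num, Or.inr ⟨by simpa using ha', by simpa using hb', by simpa using hc'⟩⟩
      · have ha' : a' = -1 * c := by linear_combination hfac
        obtain ⟨hc', hb'⟩ := aux1 c b a c' b' (-1) (-1) hc hsum' (by ring) (by ring)
          (by linear_combination h2 - c' * ha')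
          (by linear_combination h3 - b' * (a' + (-1) * c) * ha')
        refine ⟨2, by norm_num, Or.inr ⟨?_, ?_, ?_⟩⟩
        · rw [ha']; norm_num
        · simpa using hb'
        · rw [hc']; norm_num [pow_two, Complex.I_mul_I]
    · rcases mul_eq_zero.mp hfac with hfac | hfac
      · have ha' : a' = I * c := by linear_combination hfac
        obtain ⟨hc', hb'⟩ := aux1 c b a c' b' I (-I) hc hsum'
          (by simp [Complex.I_mul_I]) (by ring)
          (by linear_combination h2 - c' * ha')
          (by linear_combination h3 - b' * (a' + I * c) * ha')
        refine ⟨3, by norm_num, Or.inr ⟨?_, ?_, ?_⟩⟩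
        · rw [ha']; norm_num [pow_succ, pow_two, Complex.I_mul_I]
        · rw [hb']; norm_num [Complex.I_mul_I]
        · rw [hc']; norm_num [pow_succ, pow_two, Complex.I_mul_I]
      · have ha' : a' = -I * c := by linear_combination hfac
        obtain ⟨hc', hb'⟩ := aux1 c b a c' b' (-I) I hc hsum'
          (by simp [Complex.I_mul_I]) (by ring)
          (by linear_combination h2 - c' * ha')
          (by linear_combination h3 - b' * (a' + (-I) * c) * ha')
        refine ⟨1, by norm_num, Or.inr ⟨?_, ?_, ?_⟩⟩
        · simpa using ha'
        · rw [hb']; norm_num [Complex.I_mul_I]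
        · simpa using hc'
end

section
/- Let 𝔰₂, 𝔰₃, 𝔰₄ ∈ ℂ with 𝔰₄ + 2𝔰₂² ≠ 0. Then there exist a, b, c ∈ ℂ such that ac = 𝔰₂, (a² + c²)·b = 𝔰₃, and a⁴ + c⁴ = 𝔰₄. -/
/-! Pick a square root `s` of `𝔰₄ + 2𝔰₂²`; it is nonzero by hypothesis. It suffices to find `a, c`
with `ac = 𝔰₂` and `a² + c² = s`, since then `a⁴ + c⁴ = s² - 2𝔰₂² = 𝔰₄` and `b = 𝔰₃ / s` works.
Such `a, c` are `(u ± v) / 2` for square roots `u, v` of `s ± 2𝔰₂`, the values of `(a ± c)²`. -/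

theorem exists_mul_eq_and_sq_add_sq_eq {K : Type*} [Field K] [IsAlgClosed K] [NeZero (2 : K)]
    (p s : K) : ∃ a c : K, a * c = p ∧ a ^ 2 + c ^ 2 = s := by
  obtain ⟨u, hu⟩ := IsAlgClosed.exists_pow_nat_eq (s + 2 * p) two_pos
  obtain ⟨v, hv⟩ := IsAlgClosed.exists_pow_nat_eq (s - 2 * p) two_pos
  refine ⟨(u + v) / 2, (u - v) / 2, ?_, ?_⟩
  · field_simp
    linear_combination hu - hv
  · field_simp
    linear_combination 2 * hu + 2 * hv

theorem stmt_4 (s2 s3 s4 : ℂ) (h : s4 + 2 * s2 ^ 2 ≠ 0) :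
    ∃ a b c : ℂ, a * c = s2 ∧ (a ^ 2 + c ^ 2) * b = s3 ∧ a ^ 4 + c ^ 4 = s4 := by
  obtain ⟨s, hs⟩ := IsAlgClosed.exists_pow_nat_eq (s4 + 2 * s2 ^ 2) two_pos
  have hs0 : s ≠ 0 := by
    rintro rfl
    exact h (by simpa using hs.symm)
  obtain ⟨a, c, hac, hsum⟩ := exists_mul_eq_and_sq_add_sq_eq s2 s
  refine ⟨a, s3 / s, c, hac, by rw [hsum, mul_div_cancel₀ s3 hs0], ?_⟩
  linear_combination (a ^ 2 + c ^ 2 + s) * hsum - 2 * (a * c + s2) * hac + hs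
end

section
/- For all u, v ∈ ℂ, (2u³ − 54u² + 9uv − v² + 27v)² − 4(u² + 9u − 3v)³ = (v² − 4u³)·(v − 9u + 27)². -/
theorem stmt_10 (u v : ℂ) :
    (2 * u ^ 3 - 54 * u ^ 2 + 9 * u * v - v ^ 2 + 27 * v) ^ 2
        - 4 * (u ^ 2 + 9 * u - 3 * v) ^ 3 =
      (v ^ 2 - 4 * u ^ 3) * (v - 9 * u + 27) ^ 2 := by
  ring
end
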